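/- Let A be a hyperplane arrangement. If subarrangements B_1 and B_2 are both modular subarrangements of A, then B_1 ∩ B_2 is also a modular subarrangement of A. -/
import Mathlib


open Polynomial
open scoped Classical Pointwise

namespace HypArr

variable {K V : Type*} [Field K] [AddCommGroup V] [Module K V] [FiniteDimensional K V]

/-- `A` is an affine hyperplane arrangement: a finite set of affine hyperplanes,
i.e. nonempty affine subspaces of codimension one. -/
def IsArrangement (A : Finset (AffineSubspace K V)) : Prop :=
  ∀ H ∈ A, H ≠ ⊥ ∧ Module.finrank K V = Module.finrank K H.direction + 1

/-- The intersection poset `L(A)`: all nonempty intersections of subfamilies of `A`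
(the empty intersection being the whole space `⊤`).  The order of `L(A)` is *reverse*
inclusion, so `X ≤ Y` in `L(A)` corresponds to `Y ≤ X` as affine subspaces; the
minimal element `0̂` of `L(A)` is the whole space `⊤`. -/
noncomputable def poset (A : Finset (AffineSubspace K V)) : Finset (AffineSubspace K V) :=
  (A.powerset.image fun S => S.inf id).filter (· ≠ ⊥)

/-- The rank of an element of `L(A)`: its codimension in `V`. -/
noncomputable def rk (X : AffineSubspace K V) : ℕ :=
  Module.finrank K V - Module.finrank K X.direction

/-- The rank `r(A)` of the arrangement: the maximal rank of an element of `L(A)`. -/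
noncomputable def rank (A : Finset (AffineSubspace K V)) : ℕ := (poset A).sup rk

/-- An ideal of `L(A)` (with respect to the reverse-inclusion order of `L(A)`):
a downward closed subset of `L(A)`. -/
def IsIdeal (A I : Finset (AffineSubspace K V)) : Prop :=
  I ⊆ poset A ∧ ∀ X ∈ I, ∀ Y ∈ poset A, X ≤ Y → Y ∈ I

/-- The principal ideal `⟨X⟩ = {Y ∈ L(A) : Y ≤ X}` of `L(A)` (in the
reverse-inclusion order of `L(A)`, i.e. `{Y ∈ L(A) : X ⊆ Y}`). -/
noncomputable def principal (A : Finset (AffineSubspace K V)) (X : AffineSubspace K V) :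
    Finset (AffineSubspace K V) :=
  (poset A).filter fun Y => X ≤ Y

/-- The meet `X ∧ Y` in `L(A)`: the greatest element of `L(A)` below both `X` and `Y`
(in the reverse-inclusion order); in terms of affine subspaces it is the smallest
element of `L(A)` containing both `X` and `Y`.  In particular `X ∧ Y = 0̂` iff
`lmeet A X Y = ⊤`. -/
noncomputable def lmeet (A : Finset (AffineSubspace K V)) (X Y : AffineSubspace K V) :
    AffineSubspace K V :=
  sInf {W | W ∈ poset A ∧ X ≤ W ∧ Y ≤ W}

/-- An ideal decomposition `{I_1, …, I_m}` of `L(A)`: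
(I1) for every `X ∈ L(A) \ {0̂}` some `I j ∩ ⟨X⟩` is a nontrivial principal ideal;
(I2) joins `X_1 ∨ ⋯ ∨ X_m` (i.e. intersections) of members of the ideals exist;
(I3) these joins satisfy the rank condition. -/
def IsIdealDecomposition (A : Finset (AffineSubspace K V)) {m : ℕ}
    (I : Fin m → Finset (AffineSubspace K V)) : Prop :=
  (∀ i, IsIdeal A (I i)) ∧
  (∀ X ∈ poset A, X ≠ ⊤ →
    ∃ j, ∃ Z ∈ poset A, Z ≠ ⊤ ∧ I j ∩ principal A X = principal A Z) ∧
  (∀ f : Fin m → AffineSubspace K V, (∀ i, f i ∈ I i) →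
    Finset.univ.inf f ≠ (⊥ : AffineSubspace K V)) ∧
  (∀ f : Fin m → AffineSubspace K V, (∀ i, f i ∈ I i) →
    rk (Finset.univ.inf f) = ∑ i, rk (f i))

/-- The meet-complement `I^c = {Y ∈ L(A) : Y ∧ X = 0̂ for all X ∈ I}`. -/
noncomputable def meetCompl (A I : Finset (AffineSubspace K V)) : Finset (AffineSubspace K V) :=
  (poset A).filter fun Y => ∀ X ∈ I, lmeet A X Y = ⊤

/-- An ideal `I` is modular if `{I, I^c}` is an ideal decomposition of `L(A)`. -/
def IsModularIdeal (A I : Finset (AffineSubspace K V)) : Prop :=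
  IsIdealDecomposition A ![I, meetCompl A I]

/-- `μ` is the Möbius function `μ(0̂, ·)` of the finite intersection poset `P`
(ordered by reverse inclusion, with minimal element the maximal affine subspace in `P`):
the sum of `μ` over an interval `[0̂, X]` is `1` if `X = 0̂` and `0` otherwise. -/
def IsMobiusOn (P : Finset (AffineSubspace K V)) (μ : AffineSubspace K V → ℤ) : Prop :=
  ∀ X ∈ P, ∑ Z ∈ P.filter (fun Z => X ≤ Z), μ Z = if ∀ Z ∈ P, Z ≤ X then 1 else 0

/-- The characteristic polynomial `χ(t) = ∑_{X ∈ P} μ(X) t^{dim X}` of an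
intersection poset `P` with Möbius function `μ`. -/
noncomputable def charPolyOn (P : Finset (AffineSubspace K V)) (μ : AffineSubspace K V → ℤ) :
    Polynomial ℤ :=
  ∑ X ∈ P, C (μ X) * Polynomial.X ^ (Module.finrank K X.direction)

/-- The characteristic polynomial `χ̃(I, t) = ∑_{X ∈ I} μ(X) t^{r(I) - r(X)}` of an ideal. -/
noncomputable def tildeChi (μ : AffineSubspace K V → ℤ) (I : Finset (AffineSubspace K V)) :
    Polynomial ℤ :=
  ∑ X ∈ I, C (μ X) * Polynomial.X ^ (I.sup rk - rk X)

/-- A central arrangement: the intersection of all hyperplanes is nonempty. -/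
def IsCentral (A : Finset (AffineSubspace K V)) : Prop := A.inf id ≠ ⊥

/-- A modular element `Z ∈ L(A)`: `r(Z) + r(X) = r(Z ∧ X) + r(Z ∨ X)` for all `X ∈ L(A)`
(the join `Z ∨ X` being the intersection `Z ⊓ X` of affine subspaces). -/
def IsModularElement (A : Finset (AffineSubspace K V)) (Z : AffineSubspace K V) : Prop :=
  Z ∈ poset A ∧ ∀ X ∈ poset A, rk Z + rk X = rk (lmeet A Z X) + rk (Z ⊓ X)

/-- The intersection poset of the restriction `B^W = {H ∩ W : H ∈ B, H ∩ W ≠ ∅}`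
of the arrangement `B` to the affine subspace `W`, realized as a finset of affine
subspaces of the ambient space (with minimal element `W`). -/
noncomputable def tracePoset (B : Finset (AffineSubspace K V)) (W : AffineSubspace K V) :
    Finset (AffineSubspace K V) :=
  (((B.filter fun H => H ⊓ W ≠ ⊥).image fun H => H ⊓ W).powerset.image
      fun S => W ⊓ S.inf id).filter (· ≠ ⊥)

/-- A modular subarrangement `B ⊆ A`: `L(B)`, viewed as a subposet of `L(A)`,
is a modular ideal of `L(A)`. -/
def IsModularSub (A B : Finset (AffineSubspace K V)) : Prop :=
  B ⊆ A ∧ IsModularIdeal A (poset B)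

end HypArr


namespace HypArr

set_option linter.unusedSectionVars false

section Aux

variable {K V : Type*} [Field K] [AddCommGroup V] [Module K V] [FiniteDimensional K V]
variable {A B B₁ B₂ : Finset (AffineSubspace K V)}

lemma top_ne_bot' : (⊤ : AffineSubspace K V) ≠ ⊥ := by
  intro h
  have h0 : (0 : V) ∈ (⊤ : AffineSubspace K V) := trivial
  rw [h] at h0
  rw [← AffineSubspace.mem_coe, AffineSubspace.bot_coe] at h0
  exact h0

lemma ne_bot_mono {X Y : AffineSubspace K V} (h : X ≤ Y) (hX : X ≠ ⊥) : Y ≠ ⊥ := by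
  intro hY
  exact hX (le_bot_iff.mp (hY ▸ h))

lemma mem_poset {X : AffineSubspace K V} :
    X ∈ poset A ↔ (∃ S ⊆ A, S.inf id = X) ∧ X ≠ ⊥ := by
  unfold poset
  simp [Finset.mem_filter, Finset.mem_image, Finset.mem_powerset]

lemma ne_bot_of_mem_poset {X : AffineSubspace K V} (h : X ∈ poset A) : X ≠ ⊥ :=
  (mem_poset.mp h).2

lemma top_mem_poset : (⊤ : AffineSubspace K V) ∈ poset A :=
  mem_poset.mpr ⟨⟨∅, by simp, by simp⟩, top_ne_bot'⟩

lemma poset_mono (h : B ⊆ A) : poset B ⊆ poset A := by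
  intro X hX
  obtain ⟨⟨S, hS, hSX⟩, hne⟩ := mem_poset.mp hX
  exact mem_poset.mpr ⟨⟨S, hS.trans h, hSX⟩, hne⟩

lemma inf_mem_poset {X Y : AffineSubspace K V} (hX : X ∈ poset B) (hY : Y ∈ poset B)
    (hne : X ⊓ Y ≠ ⊥) : X ⊓ Y ∈ poset B := by
  obtain ⟨⟨S₁, hS₁, rfl⟩, -⟩ := mem_poset.mp hX
  obtain ⟨⟨S₂, hS₂, rfl⟩, -⟩ := mem_poset.mp hY
  exact mem_poset.mpr ⟨⟨S₁ ∪ S₂, Finset.union_subset hS₁ hS₂, Finset.inf_union⟩, hne⟩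

lemma hyperplane_mem_poset (hA : IsArrangement A) {H : AffineSubspace K V} (hH : H ∈ A) :
    H ∈ poset A := by
  refine mem_poset.mpr ⟨⟨{H}, Finset.singleton_subset_iff.mpr hH, by simp⟩, (hA H hH).1⟩

lemma finset_inf_mem_poset {T : Finset (AffineSubspace K V)} (hT : T ⊆ poset B)
    (hne : T.inf id ≠ ⊥) : T.inf id ∈ poset B := by
  induction T using Finset.induction with
  | empty => simpa using top_mem_poset
  | @insert a T haT ih =>
    rw [Finset.inf_insert] at hne ⊢
    have hT' : T ⊆ poset B := fun x hx => hT (Finset.mem_insert_of_mem hx)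
    have hTne : T.inf id ≠ ⊥ := by
      intro h
      rw [h, inf_bot_eq] at hne
      exact hne rfl
    exact inf_mem_poset (hT (Finset.mem_insert_self a T)) (ih hT' hTne) hne

/-- rank basic lemmas -/
lemma rk_mono {X Y : AffineSubspace K V} (h : X ≤ Y) : rk Y ≤ rk X :=
  Nat.sub_le_sub_left (Submodule.finrank_mono (AffineSubspace.direction_le h)) _

lemma rk_antisymm {X Y : AffineSubspace K V} (h : X ≤ Y) (hX : X ≠ ⊥)
    (hr : rk X ≤ rk Y) : X = Y := by
  have hd : X.direction ≤ Y.direction := AffineSubspace.direction_le h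
  have h1 : Module.finrank K X.direction ≤ Module.finrank K Y.direction :=
    Submodule.finrank_mono hd
  have h2 : Module.finrank K Y.direction ≤ Module.finrank K V := Submodule.finrank_le _
  unfold rk at hr
  have h3 : Module.finrank K Y.direction ≤ Module.finrank K X.direction := by omega
  have hdir : X.direction = Y.direction := Submodule.eq_of_le_of_finrank_le hd h3
  obtain ⟨p, hp⟩ := (AffineSubspace.nonempty_iff_ne_bot X).mpr hX
  exact AffineSubspace.ext_of_direction_eq hdir ⟨p, hp, h hp⟩

lemma rk_hyperplane (hA : IsArrangement A) {H : AffineSubspace K V} (hH : H ∈ A) :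
    rk H = 1 := by
  have := (hA H hH).2
  unfold rk
  omega

lemma ne_top_of_mem_arrangement (hA : IsArrangement A) {H : AffineSubspace K V}
    (hH : H ∈ A) : H ≠ ⊤ := by
  intro h
  have h2 := (hA H hH).2
  rw [h, AffineSubspace.direction_top, finrank_top] at h2
  omega

lemma rk_inf_hyperplane_le (hA : IsArrangement A) {X H : AffineSubspace K V}
    (hH : H ∈ A) (hne : X ⊓ H ≠ ⊥) : rk (X ⊓ H) ≤ rk X + 1 := by
  obtain ⟨p, hp⟩ := (AffineSubspace.nonempty_iff_ne_bot (X ⊓ H)).mpr hne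
  have hdir : (X ⊓ H).direction = X.direction ⊓ H.direction :=
    AffineSubspace.direction_inf_of_mem hp.1 hp.2
  have hsum := Submodule.finrank_sup_add_finrank_inf_eq X.direction H.direction
  have h1 : Module.finrank K ↥(X.direction ⊔ H.direction) ≤ Module.finrank K V :=
    Submodule.finrank_le _
  have h2 : Module.finrank K X.direction ≤ Module.finrank K V := Submodule.finrank_le _
  have h3 := (hA H hH).2
  unfold rk
  rw [hdir]
  omega

lemma exists_hyperplane_of_mem_poset {X : AffineSubspace K V} (hX : X ∈ poset B)
    (hne : X ≠ ⊤) : ∃ H ∈ B, X ≤ H := by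
  obtain ⟨⟨S, hS, rfl⟩, -⟩ := mem_poset.mp hX
  rcases S.eq_empty_or_nonempty with rfl | ⟨H, hH⟩
  · simp at hne
  · exact ⟨H, hS hH, Finset.inf_le hH⟩

lemma mem_of_hyperplane_mem_poset (hA : IsArrangement A) (hB : B ⊆ A)
    {H : AffineSubspace K V} (hHA : H ∈ A) (hH : H ∈ poset B) : H ∈ B := by
  obtain ⟨H', hH', hle⟩ := exists_hyperplane_of_mem_poset hH (ne_top_of_mem_arrangement hA hHA)
  have : H = H' := by
    apply rk_antisymm hle (hA H hHA).1
    rw [rk_hyperplane hA hHA, rk_hyperplane hA (hB hH')]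
  exact this ▸ hH'

/-- lmeet characterization -/
lemma lmeet_eq_top_iff {X Y : AffineSubspace K V} :
    lmeet A X Y = ⊤ ↔ ∀ M ∈ poset A, X ≤ M → Y ≤ M → M = ⊤ := by
  constructor
  · intro h M hM hX hY
    have : lmeet A X Y ≤ M := sInf_le ⟨hM, hX, hY⟩
    rw [h] at this
    exact top_le_iff.mp this
  · intro h
    refine le_antisymm le_top (le_sInf fun M hM => ?_)
    rw [h M hM.1 hM.2.1 hM.2.2]

/-- meetCompl lemmas -/
lemma mem_meetCompl {I : Finset (AffineSubspace K V)} {W : AffineSubspace K V} :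
    W ∈ meetCompl A I ↔ W ∈ poset A ∧ ∀ X ∈ I, lmeet A X W = ⊤ :=
  Finset.mem_filter

lemma top_mem_meetCompl {I : Finset (AffineSubspace K V)} :
    (⊤ : AffineSubspace K V) ∈ meetCompl A I := by
  refine mem_meetCompl.mpr ⟨top_mem_poset, fun X hX => ?_⟩
  rw [lmeet_eq_top_iff]
  intro M _ _ hM
  exact top_le_iff.mp hM

lemma meetCompl_isIdeal (I : Finset (AffineSubspace K V)) : IsIdeal A (meetCompl A I) := by
  constructor
  · exact Finset.filter_subset _ _
  · intro X hX Y hY hXY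
    obtain ⟨hXp, hXm⟩ := mem_meetCompl.mp hX
    refine mem_meetCompl.mpr ⟨hY, fun Z hZ => ?_⟩
    rw [lmeet_eq_top_iff]
    intro M hM hZM hYM
    have := (lmeet_eq_top_iff.mp (hXm Z hZ)) M hM hZM (hXY.trans hYM)
    exact this

/-- Fin 2 inf helper -/
lemma inf_univ_two {α : Type*} [SemilatticeInf α] [OrderTop α] (f : Fin 2 → α) :
    Finset.univ.inf f = f 0 ⊓ f 1 := by
  have h : (Finset.univ : Finset (Fin 2)) = {0, 1} := by decide
  rw [h, Finset.inf_insert, Finset.inf_singleton]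

lemma isIdeal_of_modular {I : Finset (AffineSubspace K V)} (h : IsModularIdeal A I) :
    IsIdeal A I := by
  have := h.1 0
  simpa using this

lemma mod_pair {I : Finset (AffineSubspace K V)} (h : IsModularIdeal A I)
    {Z C : AffineSubspace K V} (hZ : Z ∈ I) (hC : C ∈ meetCompl A I) :
    Z ⊓ C ≠ ⊥ ∧ rk (Z ⊓ C) = rk Z + rk C := by
  obtain ⟨-, -, h2, h3⟩ := h
  have hf : ∀ i, ![Z, C] i ∈ ![I, meetCompl A I] i := by
    intro i
    fin_cases i <;> simpa
  have e : Finset.univ.inf ![Z, C] = Z ⊓ C := by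
    rw [inf_univ_two]; simp
  constructor
  · rw [← e]; exact h2 _ hf
  · have := h3 _ hf
    rw [e, Fin.sum_univ_two] at this
    simpa using this

end Aux

end HypArr

namespace HypArr

set_option linter.unusedSectionVars false

section Aux2

variable {K V : Type*} [Field K] [AddCommGroup V] [Module K V] [FiniteDimensional K V]
variable {A B B₁ B₂ : Finset (AffineSubspace K V)}

/-- Key decomposition lemma: every element of `L(A)` is an intersection of an element
of `L(B)` and an element of the meet-complement of `L(B)`, for `B` a modular
subarrangement. -/
lemma decomp_aux (hA : IsArrangement A) (hB : B ⊆ A) (hMod : IsModularIdeal A (poset B))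
    (S : Finset (AffineSubspace K V)) :
    S ⊆ A → ∀ P ∈ poset B, ∀ C ∈ meetCompl A (poset B), P ⊓ C ⊓ S.inf id ≠ ⊥ →
      ∃ P' ∈ poset B, ∃ C' ∈ meetCompl A (poset B), P ⊓ C ⊓ S.inf id = P' ⊓ C' := by
  induction S using Finset.induction with
  | empty =>
    intro _ P hP C hC hne
    rw [Finset.inf_empty, inf_top_eq]
    exact ⟨P, hP, C, hC, rfl⟩
  | @insert L S' hLS ih =>
    intro hS P hP C hC hne
    have hLA : L ∈ A := hS (Finset.mem_insert_self L S')
    have hS' : S' ⊆ A := fun x hx => hS (Finset.mem_insert_of_mem hx)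
    rw [Finset.inf_insert, id_eq] at hne ⊢
    have hre : P ⊓ C ⊓ (L ⊓ S'.inf id) = P ⊓ C ⊓ S'.inf id ⊓ L := by
      rw [inf_comm L (S'.inf id), ← inf_assoc]
    rw [hre] at hne ⊢
    have hne' : P ⊓ C ⊓ S'.inf id ≠ ⊥ := ne_bot_mono inf_le_left hne
    obtain ⟨P', hP', C', hC', hEq⟩ := ih hS' P hP C hC hne'
    rw [hEq] at hne ⊢
    -- X = (P' ⊓ C') ⊓ L = P' ⊓ (C' ⊓ L)
    have hass : P' ⊓ C' ⊓ L = P' ⊓ (C' ⊓ L) := inf_assoc P' C' L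
    have hCLne : C' ⊓ L ≠ ⊥ := by
      refine ne_bot_mono ?_ hne
      rw [hass]
      exact inf_le_right
    by_cases hmem : C' ⊓ L ∈ meetCompl A (poset B)
    · exact ⟨P', hP', C' ⊓ L, hmem, hass⟩
    · -- C' ⊓ L is not in the meet-complement: some hyperplane H ∈ B contains it
      have hC'A : C' ∈ poset A := (mem_meetCompl.mp hC').1
      have hCLpos : C' ⊓ L ∈ poset A :=
        inf_mem_poset hC'A (hyperplane_mem_poset hA hLA) hCLne
      have : ¬ ∀ X ∈ poset B, lmeet A X (C' ⊓ L) = ⊤ := by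
        intro h
        exact hmem (mem_meetCompl.mpr ⟨hCLpos, h⟩)
      push_neg at this
      obtain ⟨Z, hZ, hlm⟩ := this
      have hlm2 : ¬ ∀ M ∈ poset A, Z ≤ M → C' ⊓ L ≤ M → M = ⊤ :=
        fun h => hlm (lmeet_eq_top_iff.mpr h)
      push_neg at hlm2
      obtain ⟨M, hMpos, hZM, hCLM, hMne⟩ := hlm2
      have hMB : M ∈ poset B := (isIdeal_of_modular hMod).2 Z hZ M hMpos hZM
      obtain ⟨H, hHB, hMH⟩ := exists_hyperplane_of_mem_poset hMB hMne
      have hHpos : H ∈ poset B := by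
        refine mem_poset.mpr ⟨⟨{H}, Finset.singleton_subset_iff.mpr hHB, by simp⟩,
          (hA H (hB hHB)).1⟩
      -- modularity pair (H, C')
      obtain ⟨hHCne, hHCrk⟩ := mod_pair hMod hHpos hC'
      have hCLH : C' ⊓ L ≤ H ⊓ C' := le_inf (hCLM.trans hMH) inf_le_left
      have hrk1 : rk (C' ⊓ L) ≤ rk C' + 1 := rk_inf_hyperplane_le hA hLA hCLne
      have hrk2 : rk (H ⊓ C') ≤ rk (C' ⊓ L) := rk_mono hCLH
      have hrkH : rk H = 1 := rk_hyperplane hA (hB hHB)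
      have hkey : C' ⊓ L = H ⊓ C' := rk_antisymm hCLH hCLne (by omega)
      have hfin : P' ⊓ C' ⊓ L = P' ⊓ H ⊓ C' := by
        rw [hass, hkey, ← inf_assoc]
      have hPHne : P' ⊓ H ≠ ⊥ := by
        rw [hfin] at hne
        exact ne_bot_mono inf_le_left hne
      have hPH : P' ⊓ H ∈ poset B := inf_mem_poset hP' hHpos hPHne
      exact ⟨P' ⊓ H, hPH, C', hC', hfin⟩

lemma decomp (hA : IsArrangement A) (hB : B ⊆ A) (hMod : IsModularIdeal A (poset B))
    {X : AffineSubspace K V} (hX : X ∈ poset A) :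
    ∃ P ∈ poset B, ∃ C ∈ meetCompl A (poset B), X = P ⊓ C := by
  obtain ⟨⟨S, hS, rfl⟩, hne⟩ := mem_poset.mp hX
  have h := decomp_aux hA hB hMod S hS ⊤ top_mem_poset ⊤ top_mem_meetCompl
    (by rw [top_inf_eq, top_inf_eq]; exact hne)
  rw [top_inf_eq, top_inf_eq] at h
  exact h

/-- The poset of an intersection of modular subarrangements. -/
lemma poset_inter (hA : IsArrangement A) (hB₁ : B₁ ⊆ A) (hB₂ : B₂ ⊆ A)
    (hI₁ : IsIdeal A (poset B₁)) (hI₂ : IsIdeal A (poset B₂)) :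
    poset (B₁ ∩ B₂) = poset B₁ ∩ poset B₂ := by
  ext X
  simp only [Finset.mem_inter]
  constructor
  · intro hX
    obtain ⟨⟨S, hS, rfl⟩, hne⟩ := mem_poset.mp hX
    constructor
    · exact mem_poset.mpr ⟨⟨S, fun x hx => (Finset.mem_inter.mp (hS hx)).1, rfl⟩, hne⟩
    · exact mem_poset.mpr ⟨⟨S, fun x hx => (Finset.mem_inter.mp (hS hx)).2, rfl⟩, hne⟩
  · rintro ⟨hX₁, hX₂⟩
    obtain ⟨⟨S, hS, rfl⟩, hne⟩ := mem_poset.mp hX₁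
    refine mem_poset.mpr ⟨⟨S, fun H hH => ?_, rfl⟩, hne⟩
    have hHB₁ : H ∈ B₁ := hS hH
    have hHA : H ∈ A := hB₁ hHB₁
    have hle : S.inf id ≤ H := Finset.inf_le hH
    have hHpos₂ : H ∈ poset B₂ := hI₂.2 _ hX₂ H (hyperplane_mem_poset hA hHA) hle
    have hHB₂ : H ∈ B₂ := mem_of_hyperplane_mem_poset hA hB₂ hHA hHpos₂
    exact Finset.mem_inter.mpr ⟨hHB₁, hHB₂⟩

/-- Main rank lemma: joins of elements of `L(B₁ ∩ B₂)` with elements of its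
meet-complement exist and have additive rank. -/
lemma main_pair (hA : IsArrangement A) (hB₁ : B₁ ⊆ A) (hB₂ : B₂ ⊆ A)
    (hM₁ : IsModularIdeal A (poset B₁)) (hM₂ : IsModularIdeal A (poset B₂))
    {Y W : AffineSubspace K V} (hY : Y ∈ poset (B₁ ∩ B₂))
    (hW : W ∈ meetCompl A (poset (B₁ ∩ B₂))) :
    Y ⊓ W ≠ ⊥ ∧ rk (Y ⊓ W) = rk Y + rk W := by
  have hpi : poset (B₁ ∩ B₂) = poset B₁ ∩ poset B₂ :=
    poset_inter hA hB₁ hB₂ (isIdeal_of_modular hM₁) (isIdeal_of_modular hM₂)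
  have hY₁ : Y ∈ poset B₁ := (Finset.mem_inter.mp (hpi ▸ hY)).1
  have hY₂ : Y ∈ poset B₂ := (Finset.mem_inter.mp (hpi ▸ hY)).2
  have hWA : W ∈ poset A := (mem_meetCompl.mp hW).1
  obtain ⟨P, hP, C, hC, rfl⟩ := decomp hA hB₁ hM₁ hWA
  have hWP : P ⊓ C ≤ P := inf_le_left
  -- P is in the meet-complement of poset B₂
  have hPA : P ∈ poset A := poset_mono hB₁ hP
  have hPmc₂ : P ∈ meetCompl A (poset B₂) := by
    refine mem_meetCompl.mpr ⟨hPA, fun Z hZ => ?_⟩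
    rw [lmeet_eq_top_iff]
    intro M hM hZM hPM
    have hM₂' : M ∈ poset B₂ := (isIdeal_of_modular hM₂).2 Z hZ M hM hZM
    have hM₁' : M ∈ poset B₁ := (isIdeal_of_modular hM₁).2 P hP M hM hPM
    have hMI : M ∈ poset (B₁ ∩ B₂) := by
      rw [hpi]
      exact Finset.mem_inter.mpr ⟨hM₁', hM₂'⟩
    have := (mem_meetCompl.mp hW).2 M hMI
    rw [lmeet_eq_top_iff] at this
    exact this M hM le_rfl (hWP.trans hPM)
  -- apply modularity of B₂ to (Y, P)
  obtain ⟨hYPne, hYPrk⟩ := mod_pair hM₂ hY₂ hPmc₂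
  have hYP₁ : Y ⊓ P ∈ poset B₁ := inf_mem_poset hY₁ hP hYPne
  -- apply modularity of B₁ to (Y ⊓ P, C) and (P, C)
  obtain ⟨hne, hrk⟩ := mod_pair hM₁ hYP₁ hC
  obtain ⟨hne', hrk'⟩ := mod_pair hM₁ hP hC
  have hass : Y ⊓ (P ⊓ C) = Y ⊓ P ⊓ C := (inf_assoc Y P C).symm
  constructor
  · rw [hass]; exact hne
  · rw [hass, hrk, hYPrk, hrk']
    omega

end Aux2

end HypArr

namespace HypArr

set_option linter.unusedSectionVars false

/-- **Corollary.** The intersection of two modular subarrangements of `A` is again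
a modular subarrangement of `A`. -/
theorem modularSub_inter
    {K V : Type*} [Field K] [AddCommGroup V] [Module K V] [FiniteDimensional K V]
    (A B₁ B₂ : Finset (AffineSubspace K V)) (hA : IsArrangement A)
    (h₁ : IsModularSub A B₁) (h₂ : IsModularSub A B₂) :
    IsModularSub A (B₁ ∩ B₂) := by
  obtain ⟨hB₁A, hM₁⟩ := h₁
  obtain ⟨hB₂A, hM₂⟩ := h₂
  have hId₁ := isIdeal_of_modular hM₁
  have hId₂ := isIdeal_of_modular hM₂
  have hpi : poset (B₁ ∩ B₂) = poset B₁ ∩ poset B₂ := poset_inter hA hB₁A hB₂A hId₁ hId₂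
  have hBint : B₁ ∩ B₂ ⊆ A := fun x hx => hB₁A (Finset.mem_inter.mp hx).1
  have hIdI : IsIdeal A (poset (B₁ ∩ B₂)) := by
    constructor
    · exact poset_mono hBint
    · intro X hX Y hY hXY
      rw [hpi] at hX ⊢
      obtain ⟨hX1, hX2⟩ := Finset.mem_inter.mp hX
      exact Finset.mem_inter.mpr ⟨hId₁.2 X hX1 Y hY hXY, hId₂.2 X hX2 Y hY hXY⟩
  refine ⟨hBint, ?_, ?_, ?_, ?_⟩
  · -- both members of the decomposition are ideals
    intro i
    fin_cases i
    · simpa using hIdI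
    · simpa using meetCompl_isIdeal (A := A) (poset (B₁ ∩ B₂))
  · -- condition (I1)
    intro X hX hXtop
    by_cases hex : ∃ Z ∈ poset (B₁ ∩ B₂), Z ≠ ⊤ ∧ X ≤ Z
    · -- the projection of X to L(B₁ ∩ B₂) is nontrivial
      set F := (poset (B₁ ∩ B₂)).filter (fun Z => X ≤ Z) with hF
      have hFI : F ⊆ poset (B₁ ∩ B₂) := Finset.filter_subset _ _
      have hXP : X ≤ F.inf id := Finset.le_inf fun Z hZ => (Finset.mem_filter.mp hZ).2
      have hPne : F.inf id ≠ ⊥ := ne_bot_mono hXP (ne_bot_of_mem_poset hX)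
      have hPI : F.inf id ∈ poset (B₁ ∩ B₂) := finset_inf_mem_poset hFI hPne
      obtain ⟨Z₀, hZ₀I, hZ₀top, hXZ₀⟩ := hex
      have hPZ₀ : F.inf id ≤ Z₀ := Finset.inf_le (Finset.mem_filter.mpr ⟨hZ₀I, hXZ₀⟩)
      have hPtop : F.inf id ≠ ⊤ := by
        intro h
        rw [h] at hPZ₀
        exact hZ₀top (top_le_iff.mp hPZ₀)
      refine ⟨0, F.inf id, hIdI.1 hPI, hPtop, ?_⟩
      simp only [Matrix.cons_val_zero]
      ext Y
      simp only [Finset.mem_inter, principal, Finset.mem_filter]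
      constructor
      · rintro ⟨hYI, hYA, hXY⟩
        exact ⟨hYA, Finset.inf_le (Finset.mem_filter.mpr ⟨hYI, hXY⟩)⟩
      · rintro ⟨hYA, hPY⟩
        exact ⟨hIdI.2 _ hPI Y hYA hPY, hYA, hXP.trans hPY⟩
    · -- X lies in the meet-complement
      have hXmc : X ∈ meetCompl A (poset (B₁ ∩ B₂)) := by
        refine mem_meetCompl.mpr ⟨hX, fun Z hZ => lmeet_eq_top_iff.mpr ?_⟩
        intro M hM hZM hXM
        by_contra hMne
        exact hex ⟨M, hIdI.2 Z hZ M hM hZM, hMne, hXM⟩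
      refine ⟨1, X, hX, hXtop, ?_⟩
      simp only [Matrix.cons_val_one, Matrix.head_cons]
      ext Y
      simp only [Finset.mem_inter, principal, Finset.mem_filter]
      constructor
      · rintro ⟨-, hYA, hXY⟩
        exact ⟨hYA, hXY⟩
      · rintro ⟨hYA, hXY⟩
        exact ⟨(meetCompl_isIdeal (A := A) (poset (B₁ ∩ B₂))).2 X hXmc Y hYA hXY, hYA, hXY⟩
  · -- condition (I2)
    intro f hf
    have h0 : f 0 ∈ poset (B₁ ∩ B₂) := by simpa using hf 0
    have h1 : f 1 ∈ meetCompl A (poset (B₁ ∩ B₂)) := by simpa using hf 1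
    rw [inf_univ_two]
    exact (main_pair hA hB₁A hB₂A hM₁ hM₂ h0 h1).1
  · -- condition (I3)
    intro f hf
    have h0 : f 0 ∈ poset (B₁ ∩ B₂) := by simpa using hf 0
    have h1 : f 1 ∈ meetCompl A (poset (B₁ ∩ B₂)) := by simpa using hf 1
    rw [inf_univ_two, Fin.sum_univ_two]
    exact (main_pair hA hB₁A hB₂A hM₁ hM₂ h0 h1).2

end HypArr
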